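/- The set 𝒯' of infinite topologically transitive subshifts is a dense Gδ subset of its closure 𝒯'‾ in the space 𝐒 of all subshifts. -/

import Mathlib

open Set Topology Filter

namespace Generic

/-- The shift map `σ` on `ℤ → ℤ`, `(σ x) i = x (i+1)`. -/
def shift : (ℤ → ℤ) → (ℤ → ℤ) := fun x i => x (i + 1)

/-- A subshift: a nonempty compact shift-invariant subset of `𝒜^ℤ`
for some finite alphabet `𝒜 ⊂ ℤ` (product topology, `ℤ` discrete). -/
structure Subshift where
  carrier : Set (ℤ → ℤ)
  nonempty' : carrier.Nonempty
  finite_alphabet : ∃ A : Finset ℤ, ∀ x ∈ carrier, ∀ i : ℤ, x i ∈ A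
  shift_invariant : shift '' carrier = carrier
  isCompact' : IsCompact carrier

/-- The finite word `w` occurs in the biinfinite sequence `x`. -/
def Occurs (w : List ℤ) (x : ℤ → ℤ) : Prop :=
  ∃ k : ℤ, ∀ i : Fin w.length, x (k + (i.1 : ℤ)) = w.get i

namespace Subshift

/-- `L_n(X)`: the set of `n`-letter words appearing in points of `X`. -/
def lang (X : Subshift) (n : ℕ) : Set (List ℤ) :=
  {w | w.length = n ∧ ∃ x ∈ X.carrier, ∀ i : Fin w.length, x (i.1 : ℤ) = w.get i}

/-- The word complexity function `c_X(n) = |L_n(X)|`. -/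
noncomputable def complexity (X : Subshift) (n : ℕ) : ℕ := (X.lang n).ncard

/-- `X` is a shift of finite type: for some finite alphabet `A` and finite set `F` of
forbidden words, `X` is the set of all points of `A^ℤ` containing no word of `F`. -/
def IsSFT (X : Subshift) : Prop :=
  ∃ (A : Finset ℤ) (F : Finset (List ℤ)),
    X.carrier = {x | (∀ i : ℤ, x i ∈ A) ∧ ∀ w ∈ F, ¬ Occurs w x}

end Subshift

/-- The cylinder set `[X, n] = {Y : L_n(Y) = L_n(X)}`. -/
def cylinder (X : Subshift) (n : ℕ) : Set Subshift := {Y | Y.lang n = X.lang n}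

/-- The topology of the space `𝐒` of all subshifts: generated by the cylinder sets `[X,n]`;
this is the topology of the metric `d(X,Y) = 2^{-inf{n : L_n(X) ≠ L_n(Y)}}`. -/
instance : TopologicalSpace Subshift :=
  TopologicalSpace.generateFrom {C | ∃ (X : Subshift) (n : ℕ), C = cylinder X n}

/-- A directed (multi)graph: edge set `E`, vertex set `V`, source and target maps. -/
structure Digraph (V : Type*) (E : Type*) where
  src : E → V
  tgt : E → V

namespace Digraph

variable {V E : Type*}

/-- A cycle of length `k`, encoded as a map `ZMod k → E` with matching endpoints. -/
def IsCycle (G : Digraph V E) {k : ℕ} (c : ZMod k → E) : Prop :=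
  0 < k ∧ ∀ i, G.tgt (c i) = G.src (c (i + 1))

/-- The vertex set of a cycle. -/
def cycleVerts (G : Digraph V E) {k : ℕ} (c : ZMod k → E) : Set V :=
  Set.range fun i => G.src (c i)

/-- The cycle `c` has an incoming edge: an edge whose terminal vertex is on the cycle
and whose initial vertex is not. -/
def HasIncoming (G : Digraph V E) {k : ℕ} (c : ZMod k → E) : Prop :=
  ∃ f : E, G.tgt f ∈ G.cycleVerts c ∧ G.src f ∉ G.cycleVerts c

/-- The cycle `c` has an outgoing edge: an edge whose initial vertex is on the cycle
and whose terminal vertex is not. -/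
def HasOutgoing (G : Digraph V E) {k : ℕ} (c : ZMod k → E) : Prop :=
  ∃ g : E, G.src g ∈ G.cycleVerts c ∧ G.tgt g ∉ G.cycleVerts c

/-- No middle cycles property: no cycle has both an incoming and an outgoing edge. -/
def NMC (G : Digraph V E) : Prop :=
  ¬ ∃ (k : ℕ) (c : ZMod k → E), G.IsCycle c ∧ G.HasIncoming c ∧ G.HasOutgoing c

/-- A simple cycle: a cycle visiting no vertex twice. -/
def IsSimpleCycle (G : Digraph V E) {k : ℕ} (c : ZMod k → E) : Prop :=
  G.IsCycle c ∧ Function.Injective fun i => G.src (c i)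

/-- One middle cycle property: there is a unique simple cycle having both an incoming
and an outgoing edge. -/
def OMC (G : Digraph V E) : Prop :=
  ∃ (k : ℕ) (c : ZMod k → E), G.IsSimpleCycle c ∧ G.HasIncoming c ∧ G.HasOutgoing c ∧
    ∀ (k' : ℕ) (c' : ZMod k' → E), G.IsSimpleCycle c' → G.HasIncoming c' → G.HasOutgoing c' →
      Set.range c' = Set.range c

end Digraph

/-- The `n`-th Rauzy graph of `X`: vertices are the `(n-1)`-letter words of `L(X)`
(embedded in `List ℤ`), edges are the `n`-letter words `w ∈ L_n(X)`, with
`src w` the length-`(n-1)` prefix and `tgt w` the length-`(n-1)` suffix. -/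
def rauzyGraph (X : Subshift) (n : ℕ) : Digraph (List ℤ) (X.lang n) :=
  ⟨fun w => w.1.dropLast, fun w => w.1.tail⟩

/-- `X` has the no middle cycles property. -/
def Subshift.IsNMC (X : Subshift) : Prop := ∃ n : ℕ, 1 ≤ n ∧ (rauzyGraph X n).NMC

/-- `X` has the one middle cycle property. -/
def Subshift.IsOMC (X : Subshift) : Prop := ∃ n : ℕ, 1 ≤ n ∧ (rauzyGraph X n).OMC

/-- The set of NMC subshifts. -/
def NMCset : Set Subshift := {X | X.IsNMC}

/-- The set of OMC subshifts. -/
def OMCset : Set Subshift := {X | X.IsOMC}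

/-- `𝐒'`: the complement of the set of NMC subshifts. -/
def Sprime : Set Subshift := NMCsetᶜ

/-- The shift of a point by `k`: `(σ^k x) i = x (i + k)`. -/
def shiftBy (k : ℤ) (x : ℤ → ℤ) : ℤ → ℤ := fun i => x (i + k)

/-- The orbit `{σ^k x : k ∈ ℤ}` of a point. -/
def orbitOf (x : ℤ → ℤ) : Set (ℤ → ℤ) := {y | ∃ k : ℤ, y = shiftBy k x}

/-- `X` is (topologically) transitive: some point has dense orbit. -/
def Subshift.IsTransitive (X : Subshift) : Prop :=
  ∃ x ∈ X.carrier, X.carrier ⊆ closure (orbitOf x)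

/-- `X` is totally transitive: for every `k ≥ 1` some point has dense `σ^k`-orbit. -/
def Subshift.IsTotallyTransitive (X : Subshift) : Prop :=
  ∀ k : ℕ, 1 ≤ k → ∃ x ∈ X.carrier,
    X.carrier ⊆ closure {y | ∃ m : ℤ, y = shiftBy (m * k) x}

/-- `𝒯'`: the set of infinite transitive subshifts. -/
def Tprime : Set Subshift := {X | X.IsTransitive ∧ X.carrier.Infinite}

/-- `𝒯𝒯'`: the set of infinite totally transitive subshifts. -/
def TTprime : Set Subshift := {X | X.IsTotallyTransitive ∧ X.carrier.Infinite}

/-- `X` is minimal: every word of the language occurs in every point. -/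
def Subshift.IsMinimal (X : Subshift) : Prop :=
  ∀ n : ℕ, ∀ w ∈ X.lang n, ∀ x ∈ X.carrier, Occurs w x

/-- `X` has a periodic point. -/
def Subshift.HasPeriodicPoint (X : Subshift) : Prop :=
  ∃ x ∈ X.carrier, ∃ k : ℕ, 1 ≤ k ∧ ∀ i : ℤ, x (i + k) = x i

/-- `X` is topologically mixing. -/
def Subshift.IsMixing (X : Subshift) : Prop :=
  ∀ (nv nw : ℕ), ∀ v ∈ X.lang nv, ∀ w ∈ X.lang nw, ∃ N : ℕ, ∀ n : ℕ, N < n →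
    ∃ x ∈ X.carrier, (∀ i : Fin v.length, x (i.1 : ℤ) = v.get i) ∧
      ∀ i : Fin w.length, x ((n : ℤ) + (i.1 : ℤ)) = w.get i

lemma Subshift.shift_mem (X : Subshift) {x : ℤ → ℤ} (hx : x ∈ X.carrier) :
    shift x ∈ X.carrier :=
  X.shift_invariant ▸ Set.mem_image_of_mem shift hx

/-- The restriction of the shift map to `X`. -/
def Subshift.restrictShift (X : Subshift) : ↥X.carrier → ↥X.carrier :=
  fun x => ⟨shift x.1, X.shift_mem x.2⟩

/-- Topological conjugacy of subshifts. -/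
def Conjugate (X Y : Subshift) : Prop :=
  ∃ φ : ↥X.carrier ≃ₜ ↥Y.carrier, ∀ x, φ (X.restrictShift x) = Y.restrictShift (φ x)

/-- `lam` is a topological eigenvalue of `(X, σ)`. -/
def Subshift.IsTopEigenvalue (X : Subshift) (lam : ℂ) : Prop :=
  ∃ f : ↥X.carrier → ℂ, Continuous f ∧ (∃ x, f x ≠ 0) ∧
    ∀ x, f (X.restrictShift x) = lam * f x

/-- A regular Toeplitz sequence. -/
def IsRegularToeplitz (x : ℤ → ℤ) : Prop :=
  ∀ ε : ℝ, 0 < ε → ∃ n : ℕ, 0 < n ∧ ∃ S : Finset ℕ, S ⊆ Finset.range n ∧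
    (1 - ε) * (n : ℝ) < (S.card : ℝ) ∧
    ∀ s ∈ S, ∀ i j : ℤ, x ((s : ℤ) + i * (n : ℤ)) = x ((s : ℤ) + j * (n : ℤ))

/-- A regular Toeplitz subshift: the orbit closure of a regular Toeplitz sequence. -/
def Subshift.IsRegularToeplitzSubshift (X : Subshift) : Prop :=
  ∃ x : ℤ → ℤ, IsRegularToeplitz x ∧ X.carrier = closure (orbitOf x)

/-- `X` is the disjoint union of `σ^i E`, `0 ≤ i < n`, for some clopen `E`. -/
def Subshift.HasCyclicPartition (X : Subshift) (n : ℕ) : Prop :=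
  ∃ E : Set ↥X.carrier, IsClopen E ∧
    (⋃ i ∈ Finset.range n, X.restrictShift^[i] '' E) = Set.univ ∧
    ∀ i j : ℕ, i < n → j < n → i ≠ j →
      Disjoint (X.restrictShift^[i] '' E) (X.restrictShift^[j] '' E)

/-- The biinfinite periodic point `p^∞` (with `p` occupying positions `[0, |p|)` and
repeating in both directions). -/
def perPoint (p : List ℤ) : ℤ → ℤ :=
  fun i => p.getD (Int.emod i (p.length : ℤ)).toNat 0

/-- The point `p^∞ m s^∞`: a left-infinite repetition of `p` (ending at position `-1`),
then `m` on `[0, |m|)`, then a right-infinite repetition of `s`. -/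
def barbellPoint (p m s : List ℤ) : ℤ → ℤ := fun i =>
  if i < 0 then perPoint p i
  else if i < (m.length : ℤ) then m.getD i.toNat 0
  else perPoint s (i - (m.length : ℤ))

/-- `𝐒(Y)`: the subshifts contained in `Y`. -/
def SubshiftsOf (Y : Subshift) : Set Subshift := {X | X.carrier ⊆ Y.carrier}

/-- `τ(y)`: the biinfinite concatenation `⋯ t(y₋₁).t(y₀) t(y₁) ⋯` of blocks of length `ℓ`. -/
def tauPoint (t : ℤ → List ℤ) (ℓ : ℕ) (y : ℤ → ℤ) : ℤ → ℤ :=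
  fun j => (t (y (Int.ediv j (ℓ : ℤ)))).getD (Int.emod j (ℓ : ℤ)).toNat 0

/-- `τ*(Y) = {σ^i τ(y) : y ∈ Y, 0 ≤ i < ℓ}`. -/
def tauStar (t : ℤ → List ℤ) (ℓ : ℕ) (Y : Subshift) : Set (ℤ → ℤ) :=
  {z | ∃ y ∈ Y.carrier, ∃ i : ℕ, i < ℓ ∧ z = fun j => tauPoint t ℓ y (j + (i : ℤ))}

/-- `τ(v)` for a finite word `v`: the concatenation of the blocks. -/
def tauWord (t : ℤ → List ℤ) (v : List ℤ) : List ℤ := (v.map t).flatten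

/-- The set of `σ`-orbits of `X`. -/
def Subshift.orbitSet (X : Subshift) : Set (Set (ℤ → ℤ)) :=
  {O | ∃ x ∈ X.carrier, O = orbitOf x}

/-!
A subshift is infinite iff its complexity is unbounded, and it is transitive iff for every `n`
some word of its language contains every word of `L_n(X)`. For the converse of the latter,
compactness yields a point through a nested sequence of such words, at fixed positions; that
point contains every word of the language, so its orbit is dense. Both criteria are countable
intersections of conditions on a single `L_m(X)`, which are open, so `𝒯'` is a Gδ in `𝐒`, hence
in `𝒯'‾`, where it is dense as any set is in its closure.
-/

def window (x : ℤ → ℤ) (a : ℤ) (n : ℕ) : List ℤ := List.ofFn fun i : Fin n => x (a + (i : ℕ))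

section Window

variable {x y : ℤ → ℤ} {a b k : ℤ} {m n L : ℕ}

@[simp] lemma length_window : (window x a n).length = n := List.length_ofFn

lemma window_eq_window_iff :
    window x a n = window y b n ↔ ∀ i : Fin n, x (a + (i : ℕ)) = y (b + (i : ℕ)) :=
  List.ofFn_inj.trans funext_iff

lemma apply_add_eq_of_window_eq (h : window x a n = window y b n) {i : ℤ} (h₀ : 0 ≤ i)
    (hi : i < n) : x (a + i) = y (b + i) := by
  simpa [Int.toNat_of_nonneg h₀] using window_eq_window_iff.1 h ⟨i.toNat, by omega⟩

lemma window_add : window x a (m + n) = window x a m ++ window x (a + m) n := by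
  simp [window, List.ofFn_add, add_assoc]

lemma window_shiftBy : window (shiftBy k x) a n = window x (a + k) n := by
  simp only [window, shiftBy, add_right_comm]

lemma take_window (h : m ≤ n) : (window x a n).take m = window x a m := by
  obtain ⟨d, rfl⟩ := Nat.exists_eq_add_of_le h
  simp [window_add]

lemma window_infix_window (h₁ : a ≤ k) (h₂ : k + n ≤ a + L) :
    window x k n <:+: window x a L := by
  obtain ⟨d, rfl⟩ : ∃ d : ℕ, k = a + d := ⟨(k - a).toNat, by omega⟩
  obtain ⟨r, rfl⟩ : ∃ r : ℕ, L = d + n + r := ⟨L - d - n, by omega⟩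
  rw [window_add, window_add]
  exact List.infix_append _ _ _

lemma window_eq_of_append_eq {s u t w : List ℤ} (hw : window x a w.length = w)
    (h : s ++ u ++ t = w) : window x (a + s.length) u.length = u := by
  subst h
  rw [List.length_append, List.length_append, window_add, window_add] at hw
  exact (List.append_inj (List.append_inj hw (by simp)).1 (by simp)).2

lemma isClopen_setOf_window_eq (a : ℤ) (n : ℕ) (u : List ℤ) :
    IsClopen {x : ℤ → ℤ | window x a n = u} :=
  (isClopen_discrete (List.ofFn ⁻¹' {u} : Set (Fin n → ℤ))).preimage
    (continuous_pi fun _ => continuous_apply _)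

lemma eventually_window_ne (h : x ≠ y) :
    ∀ᶠ n : ℕ in atTop, window x (-n) (2 * n + 1) ≠ window y (-n) (2 * n + 1) := by
  obtain ⟨j, hj⟩ := Function.ne_iff.1 h
  filter_upwards [eventually_ge_atTop j.natAbs] with n hn heq
  exact hj (by simpa using apply_add_eq_of_window_eq heq (i := j + n) (by omega) (by omega))

lemma eventually_injOn_window {T : Set (ℤ → ℤ)} (hT : T.Finite) :
    ∀ᶠ n : ℕ in atTop, InjOn (fun x => window x (-n) (2 * n + 1)) T := by
  have : ∀ p ∈ T ×ˢ T, ∀ᶠ n : ℕ in atTop,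
      window p.1 (-n) (2 * n + 1) = window p.2 (-n) (2 * n + 1) → p.1 = p.2 := fun p _ => by
    by_cases hp : p.1 = p.2
    · exact .of_forall fun _ _ => hp
    · exact (eventually_window_ne hp).mono fun _ hn heq => (hn heq).elim
  exact ((eventually_all_finite (hT.prod hT)).2 this).mono
    fun n hn x hx y hy => hn (x, y) ⟨hx, hy⟩

end Window

section Occurs

variable {u w : List ℤ} {x y : ℤ → ℤ}

lemma occurs_iff_exists_window_eq : Occurs w x ↔ ∃ k, window x k w.length = w := by
  simp_rw [Occurs, window, ← funext_iff, ← List.ofFn_inj, List.ofFn_get]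

lemma Occurs.of_infix (hw : Occurs w x) (h : u <:+: w) : Occurs u x := by
  obtain ⟨s, t, hst⟩ := h
  obtain ⟨k, hk⟩ := occurs_iff_exists_window_eq.1 hw
  exact occurs_iff_exists_window_eq.2 ⟨_, window_eq_of_append_eq hk hst⟩

lemma Occurs.eventually_infix_window (h : Occurs u x) :
    ∀ᶠ M : ℕ in atTop, u <:+: window x (-M) (2 * M + u.length) := by
  obtain ⟨k, hk⟩ := occurs_iff_exists_window_eq.1 h
  filter_upwards [eventually_ge_atTop k.natAbs] with M hM
  have := window_infix_window (x := x) (n := u.length) (a := -M) (L := 2 * M + u.length)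
    (k := k) (by omega) (by omega)
  rwa [hk] at this

lemma occurs_window_of_mem_closure_orbitOf (h : y ∈ closure (orbitOf x)) (a : ℤ) (n : ℕ) :
    Occurs (window y a n) x := by
  obtain ⟨_, hz, k, rfl⟩ :=
    mem_closure_iff.1 h _ (isClopen_setOf_window_eq a n (window y a n)).isOpen rfl
  exact occurs_iff_exists_window_eq.2 ⟨a + k, by rwa [length_window, ← window_shiftBy]⟩

lemma mem_closure_orbitOf_of_forall_occurs
    (h : ∀ n : ℕ, Occurs (window y (-n) (2 * n + 1)) x) : y ∈ closure (orbitOf x) := by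
  choose k hk using fun n => occurs_iff_exists_window_eq.1 (h n)
  simp only [length_window] at hk
  have hlim : Tendsto (fun n : ℕ => shiftBy (k n + n) x) atTop (𝓝 y) := by
    refine tendsto_pi_nhds.2 fun j => tendsto_const_nhds.congr' ?_
    filter_upwards [eventually_ge_atTop j.natAbs] with n hn
    have := apply_add_eq_of_window_eq (hk n) (i := j + n) (by omega) (by omega)
    simp only [shiftBy]
    convert this.symm using 2 <;> ring
  exact mem_closure_of_tendsto hlim (.of_forall fun n => ⟨_, rfl⟩)

end Occurs

namespace Subshift

variable (X : Subshift) {u w : List ℤ} {m n : ℕ}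

lemma shiftBy_mem (k : ℤ) {x : ℤ → ℤ} (hx : x ∈ X.carrier) : shiftBy k x ∈ X.carrier := by
  induction k using Int.induction_on with
  | zero => convert hx; funext i; simp [shiftBy]
  | succ k ih =>
    convert X.shift_mem ih using 1
    funext i
    simp only [shift, shiftBy]
    ring_nf
  | pred k ih =>
    obtain ⟨y, hy, hxy⟩ := X.shift_invariant.symm ▸ ih
    convert hy using 1
    funext i
    have := congrFun hxy (i - 1)
    simp only [shift, shiftBy, sub_add_cancel] at this ⊢
    rw [this]
    ring_nf

lemma lang_eq_image_window (a : ℤ) (n : ℕ) :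
    X.lang n = (fun x => window x a n) '' X.carrier := by
  ext w
  simp only [lang, mem_ofPred_eq, mem_image]
  constructor
  · rintro ⟨rfl, x, hx, hw⟩
    refine ⟨shiftBy (-a) x, X.shiftBy_mem _ hx, ?_⟩
    rw [window_shiftBy, add_neg_cancel]
    conv_rhs => rw [← List.ofFn_get w]
    exact List.ofFn_inj.2 (funext fun i => by simpa using hw i)
  · rintro ⟨x, hx, rfl⟩
    exact ⟨length_window, shiftBy a x, X.shiftBy_mem _ hx,
      fun i => (congrArg x (add_comm _ _)).trans (List.get_ofFn _ i).symm⟩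

lemma window_mem_lang {x : ℤ → ℤ} (hx : x ∈ X.carrier) (a : ℤ) (n : ℕ) :
    window x a n ∈ X.lang n :=
  (X.lang_eq_image_window a n).symm.subset ⟨x, hx, rfl⟩

lemma lang_finite (n : ℕ) : (X.lang n).Finite := by
  obtain ⟨A, hA⟩ := X.finite_alphabet
  refine ((Set.Finite.pi fun _ : Fin n => A.finite_toSet).image List.ofFn).subset ?_
  rw [X.lang_eq_image_window 0]
  rintro _ ⟨x, hx, rfl⟩
  exact ⟨_, fun i _ => hA x hx _, rfl⟩

lemma lang_eq_image_take (h : m ≤ n) : X.lang m = List.take m '' X.lang n := by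
  rw [X.lang_eq_image_window 0, X.lang_eq_image_window 0, image_image]
  simp_rw [take_window h]

lemma forall_infix_of_le {v : List ℤ} (hv : ∀ u ∈ X.lang n, u <:+: v) (h : m ≤ n) :
    ∀ u ∈ X.lang m, u <:+: v := by
  rw [X.lang_eq_image_take h]
  rintro _ ⟨u, hu, rfl⟩
  exact (List.take_prefix m u).isInfix.trans (hv u hu)

lemma infinite_carrier_iff : X.carrier.Infinite ↔ ∀ B : ℕ, ∃ m, B < (X.lang m).ncard := by
  refine ⟨fun hinf B => ?_, fun h hfin => ?_⟩
  · obtain ⟨T, hTX, hT⟩ := hinf.exists_subset_card_eq (B + 1)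
    obtain ⟨n, hinj⟩ := (eventually_injOn_window T.finite_toSet).exists
    refine ⟨2 * n + 1, ?_⟩
    calc B < (T : Set (ℤ → ℤ)).ncard := by simp [hT]
      _ = ((fun x => window x (-n) (2 * n + 1)) '' T).ncard := hinj.ncard_image.symm
      _ ≤ (X.lang (2 * n + 1)).ncard := ncard_le_ncard
        (by rw [X.lang_eq_image_window (-n)]; exact image_mono hTX) (X.lang_finite _)
  · obtain ⟨m, hm⟩ := h X.carrier.ncard
    rw [X.lang_eq_image_window 0] at hm
    exact (ncard_image_le hfin).not_gt hm

lemma isTransitive_iff_exists_forall_occurs :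
    X.IsTransitive ↔ ∃ x ∈ X.carrier, ∀ n, ∀ u ∈ X.lang n, Occurs u x := by
  rw [IsTransitive]
  refine exists_congr fun x => and_congr_right fun _ => ?_
  refine ⟨fun h n u hu => ?_, fun h y hy => ?_⟩
  · obtain ⟨y, hy, rfl⟩ := (X.lang_eq_image_window 0 n).subset hu
    exact occurs_window_of_mem_closure_orbitOf (h hy) 0 n
  · exact mem_closure_orbitOf_of_forall_occurs fun n => h _ _ (X.window_mem_lang hy _ _)

lemma exists_extension_of_forall_exists_infix
    (h : ∀ n, ∃ m, ∃ v ∈ X.lang m, ∀ u ∈ X.lang n, u <:+: v) (hw : w ∈ X.lang w.length)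
    (a : ℤ) (n : ℕ) :
    ∃ b : ℤ, ∃ v ∈ X.lang v.length, (∀ u ∈ X.lang n, u <:+: v) ∧
      {z | window z b v.length = v} ⊆ {z | window z a w.length = w} := by
  obtain ⟨m, v, hv, hcov⟩ := h (max w.length n)
  obtain ⟨s, t, hst⟩ := X.forall_infix_of_le hcov (le_max_left _ _) w hw
  refine ⟨a - s.length, v, by rwa [hv.1], X.forall_infix_of_le hcov (le_max_right _ _),
    fun z hz => ?_⟩
  simpa using window_eq_of_append_eq hz hst

lemma exists_forall_occurs_of_forall_exists_infix
    (h : ∀ n, ∃ m, ∃ v ∈ X.lang m, ∀ u ∈ X.lang n, u <:+: v) :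
    ∃ x ∈ X.carrier, ∀ n, ∀ u ∈ X.lang n, Occurs u x := by
  let W := {p : ℤ × List ℤ // p.2 ∈ X.lang p.2.length}
  let cyl (p : W) : Set (ℤ → ℤ) := {z | window z p.1.1 p.1.2.length = p.1.2}
  have step (p : W) (n : ℕ) : ∃ q : W, (∀ u ∈ X.lang n, u <:+: q.1.2) ∧ cyl q ⊆ cyl p := by
    obtain ⟨b, v, hv, hcov, hsub⟩ := X.exists_extension_of_forall_exists_infix h p.2 p.1.1 n
    exact ⟨⟨(b, v), hv⟩, hcov, hsub⟩
  choose next hcov hsub using step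
  obtain ⟨z₀, hz₀⟩ := X.nonempty'
  let seq (k : ℕ) : W :=
    Nat.rec ⟨(0, []), by simpa [window] using X.window_mem_lang hz₀ 0 0⟩ (fun k p => next p k) k
  let C (k : ℕ) : Set (ℤ → ℤ) := X.carrier ∩ cyl (seq k)
  have hC_closed (k : ℕ) : IsClosed (C k) :=
    X.isCompact'.isClosed.inter (isClopen_setOf_window_eq _ _ _).isClosed
  have hC_nonempty (k : ℕ) : (C k).Nonempty := by
    obtain ⟨z, hz, hzw⟩ := (X.lang_eq_image_window (seq k).1.1 _).subset (seq k).2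
    exact ⟨z, hz, hzw⟩
  obtain ⟨x, hx⟩ := IsCompact.nonempty_iInter_of_sequence_nonempty_isCompact_isClosed C
    (fun k => inter_subset_inter_right _ (hsub _ k)) hC_nonempty
    (X.isCompact'.inter_right (isClopen_setOf_window_eq _ _ _).isClosed) hC_closed
  rw [mem_iInter] at hx
  exact ⟨x, (hx 0).1, fun n u hu =>
    (occurs_iff_exists_window_eq.2 ⟨_, (hx (n + 1)).2⟩).of_infix (hcov _ n u hu)⟩

lemma isTransitive_iff_forall_exists_infix :
    X.IsTransitive ↔ ∀ n, ∃ m, ∃ v ∈ X.lang m, ∀ u ∈ X.lang n, u <:+: v := by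
  rw [isTransitive_iff_exists_forall_occurs]
  refine ⟨fun ⟨x, hx, hocc⟩ n => ?_, X.exists_forall_occurs_of_forall_exists_infix⟩
  have hM : ∀ᶠ M : ℕ in atTop, ∀ u ∈ X.lang n, u <:+: window x (-M) (2 * M + n) :=
    (eventually_all_finite (X.lang_finite n)).2 fun u hu =>
      hu.1 ▸ (hocc n u hu).eventually_infix_window
  obtain ⟨M, hM⟩ := hM.exists
  exact ⟨_, _, X.window_mem_lang hx _ _, hM⟩

end Subshift

lemma lang_eq_of_mem_cylinder {X Y : Subshift} {m n : ℕ} (hY : Y ∈ cylinder X n) (h : m ≤ n) :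
    Y.lang m = X.lang m := by
  rw [Y.lang_eq_image_take h, X.lang_eq_image_take h, hY.out]

lemma isOpen_setOf_lang (m n : ℕ) (p : Set (List ℤ) → Set (List ℤ) → Prop) :
    IsOpen {X : Subshift | p (X.lang m) (X.lang n)} := by
  refine isOpen_iff_forall_mem_open.2 fun X hX => ⟨cylinder X (max m n), fun Y hY => ?_,
    TopologicalSpace.isOpen_generateFrom_of_mem ⟨X, _, rfl⟩, rfl⟩
  rwa [mem_ofPred_eq, lang_eq_of_mem_cylinder hY (le_max_left _ _),
    lang_eq_of_mem_cylinder hY (le_max_right _ _)]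

lemma isGδ_tprime : IsGδ Tprime := by
  have : Tprime = (⋂ n, ⋃ m, {X : Subshift | ∃ v ∈ X.lang m, ∀ u ∈ X.lang n, u <:+: v}) ∩
      ⋂ B : ℕ, ⋃ m, {X : Subshift | B < (X.lang m).ncard} := by
    ext X
    simp only [Tprime, mem_ofPred_eq, mem_inter_iff, mem_iInter, mem_iUnion,
      X.isTransitive_iff_forall_exists_infix, X.infinite_carrier_iff]
  rw [this]
  exact .inter
    (.iInter fun n => (isOpen_iUnion fun m =>
      isOpen_setOf_lang m n fun L L' => ∃ v ∈ L, ∀ u ∈ L', u <:+: v).isGδ)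
    (.iInter fun B => (isOpen_iUnion fun m => isOpen_setOf_lang m m fun L _ => B < L.ncard).isGδ)

/-- `𝒯'`, the set of infinite transitive subshifts, is a dense Gδ subset of its closure. -/
theorem tprime_dense_Gδ_in_closure :
    IsGδ {X : ↥(closure Tprime) | X.1 ∈ Tprime} ∧
    Dense {X : ↥(closure Tprime) | X.1 ∈ Tprime} :=
  ⟨isGδ_tprime.preimage continuous_subtype_val, Subtype.dense_iff.2 <| by
    change _ ⊆ closure (Subtype.val '' (Subtype.val ⁻¹' Tprime))
    rw [Subtype.image_preimage_coe, inter_eq_right.2 subset_closure]⟩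

end Generic
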